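/- Let m ≥ 1, Δ₀ > 0, k_ξ > 0, r > 0, υ_max > 0, U > 0, and let Λ be an m×m real symmetric positive definite matrix with smallest eigenvalue λ_min and largest eigenvalue λ_max. Define sat : ℝᵐ → ℝᵐ by sat(x) = (tanh(‖x‖)/‖x‖)·x for x ≠ 0 and sat(0) = 0. Then for every σ ∈ ℝᵐ and x, y, z ∈ ℝ with ‖σ‖² + x² + y² + z² ≤ r², setting Δ = √(Δ₀² + x² + y² + z²) and D = √(Δ² + y² + z²), one has υ_max ⟪σ, sat(Λσ)⟫ + U (k_ξ x²/√(1+x²) + y²/D + z²/D) ≥ k_r (‖σ‖² + x² + y² + z²), where k_r = min{ υ_max λ_min tanh(λ_max r)/(λ_max r), U k_ξ/√(1+r²), U/√(Δ₀² + 2r²) }. -/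

import Mathlib

/-!
Each of the three groups of terms is bounded by one of the three constants in the minimum.
Diagonalising `Λ` gives `⟪σ, Λσ⟫ ≥ λmin ‖σ‖²` and `‖Λσ‖ ≤ λmax ‖σ‖ ≤ λmax r`. Since `tanh` is
concave on `[0, ∞)` with `tanh 0 = 0`, `t ↦ tanh t / t` is decreasing there, so
`⟪σ, sat(Λσ)⟫ = (tanh ‖Λσ‖ / ‖Λσ‖) ⟪σ, Λσ⟫ ≥ (tanh (λmax r) / (λmax r)) λmin ‖σ‖²`.
For the path-following terms it suffices that `√(1 + x²) ≤ √(1 + r²)` and `D ≤ √(Δ₀² + 2r²)`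
on the ball.
-/

open scoped RealInnerProductSpace Classical

noncomputable def sat {m : ℕ} (x : EuclideanSpace ℝ (Fin m)) : EuclideanSpace ℝ (Fin m) :=
  if x = 0 then 0 else (Real.tanh ‖x‖ / ‖x‖) • x

namespace Matrix.IsHermitian

variable {n : Type*} [Fintype n] [DecidableEq n] {A : Matrix n n ℝ} (hA : A.IsHermitian)

theorem repr_toEuclideanLin (v : EuclideanSpace ℝ n) (i : n) :
    hA.eigenvectorBasis.repr (toEuclideanLin A v) i =
      hA.eigenvalues i * hA.eigenvectorBasis.repr v i := by
  have hb : toEuclideanLin A (hA.eigenvectorBasis i) = hA.eigenvalues i • hA.eigenvectorBasis i :=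
    WithLp.ofLp_injective 2 (hA.mulVec_eigenvectorBasis i)
  rw [OrthonormalBasis.repr_apply_apply, OrthonormalBasis.repr_apply_apply,
    ← isSymmetric_toEuclideanLin_iff.mpr hA, hb, real_inner_smul_left]

theorem inner_toEuclideanLin_self (v : EuclideanSpace ℝ n) :
    ⟪v, toEuclideanLin A v⟫ = ∑ i, hA.eigenvalues i * hA.eigenvectorBasis.repr v i ^ 2 := by
  rw [← hA.eigenvectorBasis.repr.inner_map_map, PiLp.inner_apply]
  refine Finset.sum_congr rfl fun i _ => ?_
  rw [hA.repr_toEuclideanLin, RCLike.inner_apply, conj_trivial]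
  ring

theorem mul_norm_sq_le_inner_toEuclideanLin_self {c : ℝ} (hc : ∀ i, c ≤ hA.eigenvalues i)
    (v : EuclideanSpace ℝ n) : c * ‖v‖ ^ 2 ≤ ⟪v, toEuclideanLin A v⟫ := by
  rw [hA.inner_toEuclideanLin_self, ← hA.eigenvectorBasis.repr.norm_map,
    EuclideanSpace.real_norm_sq_eq, Finset.mul_sum]
  exact Finset.sum_le_sum fun i _ => mul_le_mul_of_nonneg_right (hc i) (sq_nonneg _)

theorem norm_toEuclideanLin_le {c : ℝ} (hc0 : 0 ≤ c) (hc : ∀ i, |hA.eigenvalues i| ≤ c)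
    (v : EuclideanSpace ℝ n) : ‖toEuclideanLin A v‖ ≤ c * ‖v‖ := by
  refine le_of_sq_le_sq ?_ (by positivity)
  rw [← hA.eigenvectorBasis.repr.norm_map, ← hA.eigenvectorBasis.repr.norm_map v, mul_pow,
    EuclideanSpace.real_norm_sq_eq, EuclideanSpace.real_norm_sq_eq, Finset.mul_sum]
  simp only [hA.repr_toEuclideanLin, mul_pow]
  exact Finset.sum_le_sum fun i _ =>
    mul_le_mul_of_nonneg_right (sq_le_sq.mpr (by simpa [abs_of_nonneg hc0] using hc i)) (sq_nonneg _)

end Matrix.IsHermitian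

open Set

theorem ConcaveOn.antitoneOn_div_self {f : ℝ → ℝ} (hf : ConcaveOn ℝ (Ici 0) f) (h0 : f 0 = 0) :
    AntitoneOn (fun t => f t / t) (Ioi 0) := by
  intro a ha b hb hab
  simpa [h0, neg_div] using hf.neg.secant_mono self_mem_Ici (mem_Ici.mpr ha.le) (mem_Ici.mpr hb.le)
    ha.ne' hb.ne' hab

namespace Real

theorem hasDerivAt_tanh (t : ℝ) : HasDerivAt tanh (1 / cosh t ^ 2) t := by
  have h := (hasDerivAt_sinh t).div (hasDerivAt_cosh t) (cosh_pos t).ne'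
  rw [← sq, ← sq, cosh_sq_sub_sinh_sq] at h
  rwa [show tanh = sinh / cosh from funext tanh_eq_sinh_div_cosh]

theorem concaveOn_tanh : ConcaveOn ℝ (Ici 0) tanh := by
  refine AntitoneOn.concaveOn_of_deriv (convex_Ici 0)
    (fun t _ => (hasDerivAt_tanh t).continuousAt.continuousWithinAt)
    (fun t _ => (hasDerivAt_tanh t).differentiableAt.differentiableWithinAt) ?_
  intro a ha b hb hab
  rw [interior_Ici] at ha hb
  rw [(hasDerivAt_tanh a).deriv, (hasDerivAt_tanh b).deriv]
  gcongr
  rwa [cosh_le_cosh, abs_of_pos ha, abs_of_pos hb]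

theorem tanh_nonneg {t : ℝ} (ht : 0 ≤ t) : 0 ≤ tanh t := by
  rw [tanh_eq_sinh_div_cosh]
  exact div_nonneg (sinh_nonneg_iff.mpr ht) (cosh_pos t).le

end Real

theorem inner_sat (σ v : EuclideanSpace ℝ (Fin m)) :
    ⟪σ, sat v⟫ = Real.tanh ‖v‖ / ‖v‖ * ⟪σ, v⟫ := by
  by_cases hv : v = 0
  · simp [hv, sat]
  · rw [sat, if_neg hv, real_inner_smul_right]

theorem div_mul_inner_le_inner_sat {σ v : EuclideanSpace ℝ (Fin m)} {R : ℝ}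
    (hv : ‖v‖ ≤ R) (hσv : 0 ≤ ⟪σ, v⟫) :
    Real.tanh R / R * ⟪σ, v⟫ ≤ ⟪σ, sat v⟫ := by
  rw [inner_sat]
  rcases (norm_nonneg v).eq_or_lt with hv0 | hv0
  · simp [(norm_eq_zero.mp hv0.symm)]
  · exact mul_le_mul_of_nonneg_right
      (Real.concaveOn_tanh.antitoneOn_div_self Real.tanh_zero hv0 (hv0.trans_le hv) hv) hσv

theorem Matrix.IsHermitian.mul_norm_sq_le_inner_sat_toEuclideanLin {m : ℕ}
    {A : Matrix (Fin m) (Fin m) ℝ} (hA : A.IsHermitian) {lmin lmax r : ℝ} (hlmin : 0 ≤ lmin)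
    (hlmax : 0 ≤ lmax) (hlo : ∀ i, lmin ≤ hA.eigenvalues i) (hhi : ∀ i, hA.eigenvalues i ≤ lmax)
    {σ : EuclideanSpace ℝ (Fin m)} (hσ : ‖σ‖ ≤ r) :
    lmin * (Real.tanh (lmax * r) / (lmax * r)) * ‖σ‖ ^ 2 ≤
      ⟪σ, sat (Matrix.toEuclideanLin A σ)⟫ := by
  have hr : 0 ≤ r := (norm_nonneg σ).trans hσ
  have hv : ‖Matrix.toEuclideanLin A σ‖ ≤ lmax * r :=
    (hA.norm_toEuclideanLin_le hlmax (fun i => abs_le.2 ⟨by linarith [hlo i], hhi i⟩) σ).trans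
      (by gcongr)
  have hσv := hA.mul_norm_sq_le_inner_toEuclideanLin_self hlo σ
  have hρ : 0 ≤ Real.tanh (lmax * r) / (lmax * r) :=
    div_nonneg (Real.tanh_nonneg (by positivity)) (by positivity)
  calc lmin * (Real.tanh (lmax * r) / (lmax * r)) * ‖σ‖ ^ 2
      = Real.tanh (lmax * r) / (lmax * r) * (lmin * ‖σ‖ ^ 2) := by ring
    _ ≤ Real.tanh (lmax * r) / (lmax * r) * ⟪σ, Matrix.toEuclideanLin A σ⟫ := by gcongr
    _ ≤ ⟪σ, sat (Matrix.toEuclideanLin A σ)⟫ :=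
      div_mul_inner_le_inner_sat hv ((by positivity : (0 : ℝ) ≤ _).trans hσv)

theorem div_sqrt_one_add_sq_mul_sq_le {k x r : ℝ} (hk : 0 ≤ k) (hx : x ^ 2 ≤ r ^ 2) :
    k / Real.sqrt (1 + r ^ 2) * x ^ 2 ≤ k * x ^ 2 / Real.sqrt (1 + x ^ 2) := by
  rw [div_mul_eq_mul_div]
  exact div_le_div_of_nonneg_left (by positivity) (by positivity) (Real.sqrt_le_sqrt (by linarith))

theorem lyapunov_derivative_bound_general (m : ℕ)
    (Δ₀ kξ r υmax U : ℝ)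
    (hΔ₀ : 0 < Δ₀) (hkξ : 0 < kξ) (hr : 0 < r) (hυmax : 0 < υmax) (hU : 0 < U)
    (Λ : Matrix (Fin m) (Fin m) ℝ) (hΛ : Λ.IsHermitian) (hPD : Λ.PosDef)
    (lmin lmax : ℝ)
    (hmin : IsLeast (Set.range hΛ.eigenvalues) lmin)
    (hmax : IsGreatest (Set.range hΛ.eigenvalues) lmax)
    (σ : EuclideanSpace ℝ (Fin m)) (x y z : ℝ)
    (hball : ‖σ‖ ^ 2 + x ^ 2 + y ^ 2 + z ^ 2 ≤ r ^ 2) :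
    let Δ : ℝ := Real.sqrt (Δ₀ ^ 2 + x ^ 2 + y ^ 2 + z ^ 2)
    let D : ℝ := Real.sqrt (Δ ^ 2 + y ^ 2 + z ^ 2)
    let kr : ℝ := min (υmax * lmin * (Real.tanh (lmax * r) / (lmax * r)))
      (min (U * kξ / Real.sqrt (1 + r ^ 2)) (U / Real.sqrt (Δ₀ ^ 2 + 2 * r ^ 2)))
    υmax * ⟪σ, sat (WithLp.toLp 2 (Λ.mulVec σ) : EuclideanSpace ℝ (Fin m))⟫ +
        U * (kξ * x ^ 2 / Real.sqrt (1 + x ^ 2) + y ^ 2 / D + z ^ 2 / D) ≥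
      kr * (‖σ‖ ^ 2 + x ^ 2 + y ^ 2 + z ^ 2) := by
  intro Δ D kr
  change _ ≤ υmax * ⟪σ, sat (Matrix.toEuclideanLin Λ σ)⟫ + _
  have hlmin : 0 < lmin := hmin.1.elim fun i hi => hi ▸ hPD.eigenvalues_pos i
  have hlmax : 0 < lmax := hmax.1.elim fun i hi => hi ▸ hPD.eigenvalues_pos i
  have hσr : ‖σ‖ ≤ r := (abs_le_of_sq_le_sq' (by nlinarith) hr.le).2
  have hsat : kr * ‖σ‖ ^ 2 ≤ υmax * ⟪σ, sat (Matrix.toEuclideanLin Λ σ)⟫ := calc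
    kr * ‖σ‖ ^ 2 ≤ υmax * lmin * (Real.tanh (lmax * r) / (lmax * r)) * ‖σ‖ ^ 2 := by
      gcongr; exact min_le_left _ _
    _ ≤ υmax * ⟪σ, sat (Matrix.toEuclideanLin Λ σ)⟫ := by
      rw [mul_assoc υmax, mul_assoc υmax]
      gcongr
      exact hΛ.mul_norm_sq_le_inner_sat_toEuclideanLin hlmin.le hlmax.le
        (fun i => hmin.2 ⟨i, rfl⟩) (fun i => hmax.2 ⟨i, rfl⟩) hσr
  have hx : kr * x ^ 2 ≤ U * (kξ * x ^ 2 / Real.sqrt (1 + x ^ 2)) := calc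
    kr * x ^ 2 ≤ U * (kξ / Real.sqrt (1 + r ^ 2) * x ^ 2) := by
      rw [← mul_assoc, mul_div_assoc']
      gcongr; exact (min_le_right _ _).trans (min_le_left _ _)
    _ ≤ U * (kξ * x ^ 2 / Real.sqrt (1 + x ^ 2)) := by
      gcongr; exact div_sqrt_one_add_sq_mul_sq_le hkξ.le (by nlinarith)
  have hD : D ≤ Real.sqrt (Δ₀ ^ 2 + 2 * r ^ 2) := by
    refine Real.sqrt_le_sqrt ?_
    rw [Real.sq_sqrt (by positivity)]
    nlinarith
  have hyz : kr * (y ^ 2 + z ^ 2) ≤ U * (y ^ 2 / D + z ^ 2 / D) := calc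
    kr * (y ^ 2 + z ^ 2) ≤ U / Real.sqrt (Δ₀ ^ 2 + 2 * r ^ 2) * (y ^ 2 + z ^ 2) := by
      gcongr; exact (min_le_right _ _).trans (min_le_right _ _)
    _ ≤ U / D * (y ^ 2 + z ^ 2) := by gcongr
    _ = U * (y ^ 2 / D + z ^ 2 / D) := by ring
  linear_combination hsat + hx + hyz

/-- **Key quantitative step of Theorem 1 (Lyapunov-derivative bound).**
For `‖σ‖² + x² + y² + z² ≤ r²`, with `Δ = √(Δ₀² + x² + y² + z²)` and
`D = √(Δ² + y² + z²)`,
`υ_max ⟪σ, sat(Λσ)⟫ + U (k_ξ x²/√(1+x²) + y²/D + z²/D) ≥ k_r (‖σ‖² + x² + y² + z²)`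
with `k_r = min{υ_max λmin tanh(λmax r)/(λmax r), U k_ξ/√(1+r²), U/√(Δ₀²+2r²)}`. -/
theorem lyapunov_derivative_bound (m : ℕ) (hm : 1 ≤ m)
    (Δ₀ kξ r υmax U : ℝ)
    (hΔ₀ : 0 < Δ₀) (hkξ : 0 < kξ) (hr : 0 < r) (hυmax : 0 < υmax) (hU : 0 < U)
    (Λ : Matrix (Fin m) (Fin m) ℝ) (hΛ : Λ.IsHermitian) (hPD : Λ.PosDef)
    (lmin lmax : ℝ)
    (hmin : IsLeast (Set.range hΛ.eigenvalues) lmin)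
    (hmax : IsGreatest (Set.range hΛ.eigenvalues) lmax)
    (σ : EuclideanSpace ℝ (Fin m)) (x y z : ℝ)
    (hball : ‖σ‖ ^ 2 + x ^ 2 + y ^ 2 + z ^ 2 ≤ r ^ 2) :
    let Δ : ℝ := Real.sqrt (Δ₀ ^ 2 + x ^ 2 + y ^ 2 + z ^ 2)
    let D : ℝ := Real.sqrt (Δ ^ 2 + y ^ 2 + z ^ 2)
    let kr : ℝ := min (υmax * lmin * (Real.tanh (lmax * r) / (lmax * r)))
      (min (U * kξ / Real.sqrt (1 + r ^ 2)) (U / Real.sqrt (Δ₀ ^ 2 + 2 * r ^ 2)))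
    υmax * ⟪σ, sat (WithLp.toLp 2 (Λ.mulVec σ) : EuclideanSpace ℝ (Fin m))⟫ +
        U * (kξ * x ^ 2 / Real.sqrt (1 + x ^ 2) + y ^ 2 / D + z ^ 2 / D) ≥
      kr * (‖σ‖ ^ 2 + x ^ 2 + y ^ 2 + z ^ 2) :=
  lyapunov_derivative_bound_general m Δ₀ kξ r υmax U hΔ₀ hkξ hr hυmax hU Λ hΛ hPD lmin lmax hmin
    hmax σ x y z hball
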